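/- arXiv:2103.02589 — 6 statements merged into one kernel-verified Lean document; each statement's English description precedes it below -/
import Mathlib

section
/- Over the field GF(2), the identity matrix is the only symmetric n×n matrix all of whose principal minors are nonzero. -/
open Matrix

def eSingleton {n : ℕ} (i : Fin n) : Fin 1 ≃ ({i} : Finset (Fin n)) :=
  { toFun := fun _ => ⟨i, Finset.mem_singleton_self i⟩
    invFun := fun _ => 0
    left_inv := fun x => Subsingleton.elim _ _
    right_inv := fun x => Subtype.ext (Finset.mem_singleton.mp x.2).symm }

def ePair {n : ℕ} {i j : Fin n} (hij : i ≠ j) : Fin 2 ≃ ({i, j} : Finset (Fin n)) :=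
  { toFun := ![⟨i, by simp⟩, ⟨j, by simp⟩]
    invFun := fun x => if (x : Fin n) = i then 0 else 1
    left_inv := fun x => by fin_cases x <;> simp [hij, Ne.symm hij]
    right_inv := fun x => by
      by_cases hx : (x : Fin n) = i
      · simp only [hx, if_pos, Matrix.cons_val_zero]
        exact Subtype.ext hx.symm
      · have hxj : (x : Fin n) = j := by
          rcases Finset.mem_insert.mp x.2 with h' | h'
          · exact absurd h' hx
          · exact Finset.mem_singleton.mp h'
        simp only [if_neg hx, Matrix.cons_val_one, Matrix.head_cons]
        exact Subtype.ext hxj.symm }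

/-- Over GF(2), the identity matrix is the only symmetric matrix
all of whose principal minors are nonzero (principally regular). -/
theorem identity_only_principally_regular_gf2
    {n : ℕ} (A : Matrix (Fin n) (Fin n) (ZMod 2)) (hA : A.IsSymm)
    (hreg : ∀ S : Finset (Fin n),
      (A.submatrix ((↑) : S → Fin n) ((↑) : S → Fin n)).det ≠ 0) :
    A = 1 := by
  have hne : ∀ x : ZMod 2, x ≠ 0 → x = 1 := by decide
  have hdiag : ∀ i, A i i = 1 := by
    intro i
    have h := hreg {i}
    rw [← Matrix.det_submatrix_equiv_self (eSingleton i), Matrix.det_fin_one,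
      Matrix.submatrix_apply, Matrix.submatrix_apply] at h
    have e0 : ((eSingleton i 0 : ({i} : Finset (Fin n))) : Fin n) = i := rfl
    rw [e0] at h
    exact hne _ h
  have hoff : ∀ i j, i ≠ j → A i j = 0 := by
    intro i j hij
    have h := hreg {i, j}
    rw [← Matrix.det_submatrix_equiv_self (ePair hij), Matrix.det_fin_two] at h
    simp only [Matrix.submatrix_apply] at h
    have e0 : ((ePair hij 0 : ({i, j} : Finset (Fin n))) : Fin n) = i := rfl
    have e1 : ((ePair hij 1 : ({i, j} : Finset (Fin n))) : Fin n) = j := rfl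
    rw [e0, e1] at h
    have hji : A j i = A i j := by
      have := congrFun (congrFun hA j) i
      simpa [Matrix.transpose_apply] using this.symm
    rw [hdiag i, hdiag j, hji] at h
    revert h
    generalize A i j = x
    revert x; decide
  ext i j
  by_cases h : i = j
  · subst h; simp [Matrix.one_apply, hdiag]
  · simp [Matrix.one_apply, h, hoff i j h]
end

section
/- In the von Staudt multiplication construction over any field K with x, y ∈ K: starting from 1_x = (1:0:1), 1_y = (0:1:1), x̂ = (x:0:1), ŷ = (y:0:1), the lines g = 1_x × 1_y, h = x̂ × 1_y, points ∞_g = g × ℓ_∞, ∞_h = h × ℓ_∞ (with ℓ_∞ = (0,0,1)), line g' = ∞_g × ŷ, point q = g' × ℓ_y (with ℓ_y = (1,0,0)), line h' = q × ∞_h, and the point h' × ℓ_x (with ℓ_x = (0,1,0)) yield—up to nonzero scalar—the coordinate vector (x·y, 0, 1). -/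
open Matrix

/-- The cross product on `K³` written in coordinates. -/
def cross3 {K : Type*} [Field K] (u v : Fin 3 → K) : Fin 3 → K :=
  ![u 1 * v 2 - u 2 * v 1, -(u 0 * v 2 - u 2 * v 0), u 0 * v 1 - u 1 * v 0]

/-- the von Staudt multiplication construction computes `x * y`:
the final intersection point is a nonzero scalar multiple of `(x·y : 0 : 1)`. -/
theorem vonStaudt_multiplication
    {K : Type*} [Field K] (x y : K) :
    let oneX : Fin 3 → K := ![1, 0, 1]
    let oneY : Fin 3 → K := ![0, 1, 1]
    let px : Fin 3 → K := ![x, 0, 1]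
    let py : Fin 3 → K := ![y, 0, 1]
    let linf : Fin 3 → K := ![0, 0, 1]
    let ly : Fin 3 → K := ![1, 0, 0]
    let lx : Fin 3 → K := ![0, 1, 0]
    let g := cross3 oneX oneY
    let h := cross3 px oneY
    let infG := cross3 g linf
    let infH := cross3 h linf
    let g' := cross3 infG py
    let q := cross3 g' ly
    let h' := cross3 q infH
    ∃ c : K, c ≠ 0 ∧ cross3 h' lx = c • ![x * y, 0, 1] := by
  exact ⟨1, one_ne_zero, by
    funext i; fin_cases i <;> simp [cross3] <;> ring⟩
end

section
/- Let Σ = [[A, B],[Bᵀ, C]] be a symmetric matrix over an infinite field K where C is the identity matrix and B is fixed. Then for a generic choice of the diagonal entries of A (i.e., on a nonempty Zariski-open set of diagonal values), the Schur complement A − B Bᵀ is invertible; in fact, for generic diagonal entries of A, the entire matrix Σ is principally regular. -/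
/-!
Replace the diagonal entries of `A` by indeterminates `X i`. By the Schur complement with respect
to the identity block, each principal minor of the resulting block matrix is the determinant of a
matrix `diagonal (X ∘ v) + G` with `G` constant; sending every `X i` to a single variable `t`
turns it into the characteristic polynomial of `-G`, which is monic, so the minor is a nonzero
polynomial. Their product is the required `p`, and `A' - B * Bᵀ` is the Schur complement of the
full minor.
-/

open Matrix MvPolynomial

theorem Matrix.det_diagonal_X_add_map_C_ne_zero {R ι α : Type*} [CommRing R] [Nontrivial R]
    [Fintype α] [DecidableEq α] (v : α → ι) (G : Matrix α α R) :
    (diagonal (fun a => X (v a)) + G.map C : Matrix α α (MvPolynomial ι R)).det ≠ 0 := by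
  have h_char : (aeval fun _ => Polynomial.X : MvPolynomial ι R →ₐ[R] Polynomial R).mapMatrix
      (diagonal (fun a => X (v a)) + G.map C) = charmatrix (-G) := by
    ext i j
    by_cases hij : i = j
    · subst hij; simp
    · simp [hij]
  intro h
  apply (charpoly_monic (-G)).ne_zero
  rw [charpoly, ← h_char, ← AlgHom.map_det, h, map_zero]

theorem Matrix.det_submatrix_fromBlocks_one {R α β : Type*} [CommRing R]
    [Fintype α] [Fintype β] [DecidableEq α] [DecidableEq β]
    (P : Matrix α α R) (Q : Matrix α β R) (Q' : Matrix β α R) (S : Finset (α ⊕ β)) :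
    ((fromBlocks P Q Q' 1).submatrix ((↑) : S → α ⊕ β) (↑)).det =
      (P.submatrix (Subtype.val : S.toLeft → α) Subtype.val -
        Q.submatrix Subtype.val (Subtype.val : S.toRight → β) *
          Q'.submatrix (Subtype.val : S.toRight → β) (Subtype.val : S.toLeft → α)).det := by
  let e : S.toLeft ⊕ S.toRight ≃ S := (Equiv.sumCongr
    (Equiv.subtypeEquivRight fun _ => Finset.mem_toLeft)
    (Equiv.subtypeEquivRight fun _ => Finset.mem_toRight)).trans Equiv.subtypeSum.symm
  rw [← det_submatrix_equiv_self e, submatrix_submatrix,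
    ← det_fromBlocks_one₂₂, ← submatrix_one _ Subtype.val_injective]
  congr 1
  ext (i | i) (j | j) <;> rfl

section GenericDiagonal

variable {R m : Type*} [CommRing R] [DecidableEq m]

noncomputable def Matrix.withGenericDiagonal (A : Matrix m m R) : Matrix m m (MvPolynomial m R) :=
  diagonal X + (A - diagonal A.diag).map C

theorem Matrix.map_eval_withGenericDiagonal (A A' : Matrix m m R) (d : m → R)
    (hoff : ∀ i j, i ≠ j → A' i j = A i j) (hdiag : ∀ i, A' i i = d i) :
    (A.withGenericDiagonal).map (eval d) = A' := by
  ext i j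
  by_cases hij : i = j
  · subst hij; simp [withGenericDiagonal, hdiag]
  · simp [withGenericDiagonal, hij, hoff i j hij]

theorem Matrix.det_submatrix_fromBlocks_withGenericDiagonal_ne_zero [Nontrivial R] {n : Type*}
    [Fintype m] [Fintype n] [DecidableEq n] (A : Matrix m m R) (B : Matrix m n R)
    (S : Finset (m ⊕ n)) :
    ((fromBlocks A.withGenericDiagonal (B.map C) (Bᵀ.map C) 1).submatrix
      ((↑) : S → m ⊕ n) (↑)).det ≠ 0 := by
  rw [det_submatrix_fromBlocks_one, withGenericDiagonal, submatrix_add, Pi.add_apply, Pi.add_apply,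
    submatrix_diagonal _ _ Subtype.val_injective, add_sub_assoc, submatrix_map, submatrix_map,
    submatrix_map, ← Matrix.map_mul, ← Matrix.map_sub _ (map_sub C)]
  exact det_diagonal_X_add_map_C_ne_zero _ _

end GenericDiagonal

theorem generic_diagonal_principally_regular_general
    {K : Type*} [Field K]
    {m n : Type*} [Fintype m] [Fintype n] [DecidableEq m] [DecidableEq n]
    (A : Matrix m m K) (B : Matrix m n K) :
    ∃ p : MvPolynomial m K, p ≠ 0 ∧
      ∀ d : m → K, MvPolynomial.eval d p ≠ 0 →
        -- `A'` is `A` with its diagonal replaced by `d`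
        ∀ A' : Matrix m m K,
          (∀ i j, i ≠ j → A' i j = A i j) → (∀ i, A' i i = d i) →
          (A' - B * Bᵀ).det ≠ 0 ∧
          (∀ S : Finset (m ⊕ n),
            ((Matrix.fromBlocks A' B Bᵀ 1).submatrix
              ((↑) : S → m ⊕ n) ((↑) : S → m ⊕ n)).det ≠ 0) := by
  set M := fromBlocks A.withGenericDiagonal (B.map C) (Bᵀ.map C) 1
  refine ⟨∏ S : Finset (m ⊕ n), (M.submatrix ((↑) : S → m ⊕ n) (↑)).det,
    Finset.prod_ne_zero_iff.2 fun S _ =>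
      det_submatrix_fromBlocks_withGenericDiagonal_ne_zero A B S,
    fun d hd A' hoff hdiag => ?_⟩
  have hM : M.map (eval d) = fromBlocks A' B Bᵀ 1 := by
    simp [M, fromBlocks_map, map_eval_withGenericDiagonal A A' d hoff hdiag, Function.comp_def]
  have h_minor (S : Finset (m ⊕ n)) :
      ((fromBlocks A' B Bᵀ 1).submatrix ((↑) : S → m ⊕ n) (↑)).det ≠ 0 := by
    rw [map_prod, Finset.prod_ne_zero_iff] at hd
    simpa [← hM, ← submatrix_map, RingHom.map_det] using hd S (Finset.mem_univ S)
  refine ⟨?_, h_minor⟩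
  rw [← det_fromBlocks_one₂₂,
    ← det_submatrix_equiv_self (Equiv.subtypeUnivEquiv Finset.mem_univ)]
  exact h_minor Finset.univ

/-- over an infinite field, with the off-diagonal entries of `A`
and the matrix `B` fixed and `C = 1`, a generic choice of the diagonal entries
of `A` (i.e. all choices avoiding the zero set of some nonzero polynomial)
makes the Schur complement `A - B * Bᵀ` invertible and in fact makes the whole
block matrix `[[A, B], [Bᵀ, 1]]` principally regular. -/
theorem generic_diagonal_principally_regular
    {K : Type*} [Field K] [Infinite K]
    {m n : Type*} [Fintype m] [Fintype n] [DecidableEq m] [DecidableEq n]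
    (A : Matrix m m K) (hA : A.IsSymm) (B : Matrix m n K) :
    ∃ p : MvPolynomial m K, p ≠ 0 ∧
      ∀ d : m → K, MvPolynomial.eval d p ≠ 0 →
        -- `A'` is `A` with its diagonal replaced by `d`
        ∀ A' : Matrix m m K,
          (∀ i j, i ≠ j → A' i j = A i j) → (∀ i, A' i i = d i) →
          (A' - B * Bᵀ).det ≠ 0 ∧
          (∀ S : Finset (m ⊕ n),
            ((Matrix.fromBlocks A' B Bᵀ 1).submatrix
              ((↑) : S → m ⊕ n) ((↑) : S → m ⊕ n)).det ≠ 0) :=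
  generic_diagonal_principally_regular_general A B
end

section
/- The 5×5 real symmetric matrix Σ with rows indexed i,j,x,y,z given by Σ = [[1,1,−1,0,0],[1,−1,−1,0,0],[−1,−1,1,0,1],[0,0,0,2,0],[0,0,1,0,1]] satisfies: det Σ_{xyz} = 0, det Σ_{xy} = 2, det Σ_{yz} = 2, det Σ_{xz} = 0, det Σ_{i{xy}, j{xy}} = 0, and det Σ_{i{yz}, j{yz}} = 2 ≠ 0. -/
open Matrix

/-- The symmetric (not positive semidefinite) matrix of Example 5.2, rows and
columns indexed `i, j, x, y, z = 0, 1, 2, 3, 4`. -/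
def inconsistentCI : Matrix (Fin 5) (Fin 5) ℝ :=
  !![1, 1, -1, 0, 0;
     1, -1, -1, 0, 0;
     -1, -1, 1, 0, 1;
     0, 0, 0, 2, 0;
     0, 0, 1, 0, 1]

/-- the stated principal and almost-principal minors of the
matrix, exhibiting the inconsistency of the semidefinite CI definition for
general symmetric matrices. -/
theorem inconsistentCI_minors :
    (inconsistentCI.submatrix ![2, 3, 4] ![2, 3, 4]).det = 0 ∧   -- det Σ_{xyz}
    (inconsistentCI.submatrix ![2, 3] ![2, 3]).det = 2 ∧          -- det Σ_{xy}
    (inconsistentCI.submatrix ![3, 4] ![3, 4]).det = 2 ∧          -- det Σ_{yz}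
    (inconsistentCI.submatrix ![2, 4] ![2, 4]).det = 0 ∧          -- det Σ_{xz}
    (inconsistentCI.submatrix ![0, 2, 3] ![1, 2, 3]).det = 0 ∧    -- det Σ_{i xy, j xy}
    (inconsistentCI.submatrix ![0, 3, 4] ![1, 3, 4]).det = 2 ∧    -- det Σ_{i yz, j yz}
    (inconsistentCI.submatrix ![0, 3, 4] ![1, 3, 4]).det ≠ 0 := by
  refine ⟨?_, ?_, ?_, ?_, ?_, ?_, ?_⟩ <;>
    simp [inconsistentCI, Matrix.det_fin_three, Matrix.det_fin_two, Matrix.submatrix,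
      Matrix.of_apply]
end

section
/- Let Σ be a real positive semidefinite symmetric matrix indexed by N, let i, j ∈ N be distinct, and K ⊆ N \ {i,j}. If L ⊆ K satisfies det Σ_L ≠ 0 and rank Σ_L = rank Σ_K, and L' ⊆ K also satisfies det Σ_{L'} ≠ 0 and rank Σ_{L'} = rank Σ_K, then det Σ_{iL,jL} = 0 if and only if det Σ_{iL',jL'} = 0. -/
/-!
Write `Σ` as the Gram matrix of vectors `v n` in a Euclidean space. When `Σ_L` is invertible,
the Schur complement formula gives `det Σ_{iL,jL} = det Σ_L * ⟪v i, v j - P_L (v j)⟫`, where `P_L`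
is the orthogonal projection onto `span {v l | l ∈ L}`. The rank of a Gram matrix is the dimension
of the span of its vectors, so `rank Σ_L = rank Σ_K` and `L ⊆ K` force that span to be
`span {v k | k ∈ K}`; hence the second factor is the same for `L` and `L'`.
-/

open Matrix

namespace Matrix

section Schur

variable {ι R : Type*} [Fintype ι] [DecidableEq ι] [Field R]

theorem det_eq_det_submatrix_some_mul_schur (M : Matrix (Option ι) (Option ι) R)
    (h : (M.submatrix some some).det ≠ 0) :
    M.det = (M.submatrix some some).det *
      (M none none - (fun l => M none (some l)) ⬝ᵥ
        ((M.submatrix some some)⁻¹ *ᵥ fun l => M (some l) none)) := by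
  have := (M.submatrix some some).invertibleOfIsUnitDet (isUnit_iff_ne_zero.2 h)
  have hM : M = (fromBlocks (M.submatrix some some) (of fun l (_ : Unit) => M (some l) none)
      (of fun _ l => M none (some l)) (of fun _ _ => M none none)).submatrix
        (Equiv.optionEquivSumPUnit ι) (Equiv.optionEquivSumPUnit ι) := by
    ext (_ | _) (_ | _) <;> rfl
  conv_lhs =>
    rw [hM, det_submatrix_equiv_self, det_fromBlocks₁₁, det_unique (n := Unit),
      invOf_eq_nonsing_inv]
  simp only [sub_apply, of_apply, Matrix.mul_apply, dotProduct, mulVec, Finset.mul_sum,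
    Finset.sum_mul, mul_assoc]
  rw [Finset.sum_comm]

end Schur

section Gram

variable {𝕜 E : Type*} [RCLike 𝕜] [NormedAddCommGroup E] [InnerProductSpace 𝕜 E]

open scoped ComplexOrder InnerProductSpace

theorem PosSemidef.exists_eq_gram {n : Type*} [Fintype n] [DecidableEq n] {A : Matrix n n 𝕜}
    (hA : A.PosSemidef) : ∃ v : n → EuclideanSpace 𝕜 n, A = gram 𝕜 v := by
  obtain ⟨B, rfl⟩ : ∃ B : Matrix n n 𝕜, A = Bᴴ * B := by
    open scoped MatrixOrder in
    exact CStarAlgebra.nonneg_iff_eq_star_mul_self.mp hA.nonneg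
  refine ⟨fun j => WithLp.toLp 2 (B.col j), ?_⟩
  ext i j
  simp [EuclideanSpace.inner_eq_star_dotProduct, Matrix.mul_apply, dotProduct, mul_comm]

theorem rank_gram {ι : Type*} [Fintype ι] [FiniteDimensional 𝕜 E] (v : ι → E) :
    (gram 𝕜 v).rank = Module.finrank 𝕜 (Submodule.span 𝕜 (Set.range v)) := by
  let b := stdOrthonormalBasis 𝕜 E
  let e : E ≃ₗ[𝕜] (Fin (Module.finrank 𝕜 E) → 𝕜) :=
    b.repr.toLinearEquiv.trans (WithLp.linearEquiv 2 𝕜 _)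
  rw [gram_eq_conjTranspose_mul b, rank_conjTranspose_mul_self, rank_eq_finrank_span_cols,
    ← e.finrank_map_eq, Submodule.map_span, ← Set.range_comp]
  rfl

section Projection

variable {ι : Type*} [Fintype ι] [DecidableEq ι] {v : ι → E}
  [(Submodule.span 𝕜 (Set.range v)).HasOrthogonalProjection]

theorem starProjection_span_range_eq_of_det_gram_ne_zero (hv : (gram 𝕜 v).det ≠ 0) (w : E) :
    (Submodule.span 𝕜 (Set.range v)).starProjection w =
      ∑ l, ((gram 𝕜 v)⁻¹ *ᵥ fun m => ⟪v m, w⟫_𝕜) l • v l := by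
  set x := (gram 𝕜 v)⁻¹ *ᵥ fun m => ⟪v m, w⟫_𝕜
  have hx : gram 𝕜 v *ᵥ x = fun m => ⟪v m, w⟫_𝕜 := by
    rw [mulVec_mulVec, mul_nonsing_inv _ (isUnit_iff_ne_zero.2 hv), one_mulVec]
  have hortho : Submodule.span 𝕜 (Set.range v) ⟂ 𝕜 ∙ (w - ∑ l, x l • v l) := by
    refine Submodule.isOrtho_span.2 ?_
    rintro _ ⟨m, rfl⟩ _ rfl
    rw [inner_sub_right, inner_sum, sub_eq_zero, ← congrFun hx m]
    simp only [inner_smul_right, mulVec, dotProduct, gram_apply, mul_comm]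
  exact Submodule.eq_starProjection_of_mem_orthogonal
    (Submodule.sum_mem _ fun l _ => Submodule.smul_mem _ _ (Submodule.subset_span ⟨l, rfl⟩))
    (hortho.symm (Submodule.mem_span_singleton_self _))

theorem inner_starProjection_span_range_of_det_gram_ne_zero (hv : (gram 𝕜 v).det ≠ 0)
    (u w : E) :
    ⟪u, (Submodule.span 𝕜 (Set.range v)).starProjection w⟫_𝕜 =
      (fun l => ⟪u, v l⟫_𝕜) ⬝ᵥ ((gram 𝕜 v)⁻¹ *ᵥ fun l => ⟪v l, w⟫_𝕜) := by
  simp only [starProjection_span_range_eq_of_det_gram_ne_zero hv, inner_sum, inner_smul_right,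
    dotProduct, mul_comm]

end Projection

variable {N : Type*}

theorem span_range_comp_coe_eq_of_rank_gram_eq [FiniteDimensional 𝕜 E] (v : N → E)
    {S T : Finset N} (hST : S ⊆ T)
    (h : (gram 𝕜 (v ∘ ((↑) : S → N))).rank = (gram 𝕜 (v ∘ ((↑) : T → N))).rank) :
    Submodule.span 𝕜 (Set.range (v ∘ ((↑) : S → N))) =
      Submodule.span 𝕜 (Set.range (v ∘ ((↑) : T → N))) := by
  refine Submodule.eq_of_le_of_finrank_eq (Submodule.span_mono ?_)
    (by rw [← rank_gram, ← rank_gram, h])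
  rintro _ ⟨l, rfl⟩
  exact ⟨⟨l, hST l.2⟩, rfl⟩

theorem det_submatrix_optionElim_gram_eq_zero_iff [DecidableEq N] (v : N → E) (i j : N)
    {S : Finset N} (hS : (gram 𝕜 (v ∘ ((↑) : S → N))).det ≠ 0) {V : Submodule 𝕜 E}
    [V.HasOrthogonalProjection] (hV : Submodule.span 𝕜 (Set.range (v ∘ ((↑) : S → N))) = V) :
    ((gram 𝕜 v).submatrix (fun o : Option S => o.elim i (↑·))
        (fun o : Option S => o.elim j (↑·))).det = 0 ↔
      ⟪v i, v j - V.starProjection (v j)⟫_𝕜 = 0 := by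
  subst hV
  have hschur : ((gram 𝕜 v).submatrix (fun o : Option S => o.elim i (↑·))
      (fun o : Option S => o.elim j (↑·))).det = (gram 𝕜 (v ∘ ((↑) : S → N))).det *
        (⟪v i, v j⟫_𝕜 - (fun l : S => ⟪v i, v l⟫_𝕜) ⬝ᵥ
          ((gram 𝕜 (v ∘ ((↑) : S → N)))⁻¹ *ᵥ fun l : S => ⟪v l, v j⟫_𝕜)) :=
    det_eq_det_submatrix_some_mul_schur _ hS
  rw [hschur, mul_eq_zero, or_iff_right hS, inner_sub_right,
    inner_starProjection_span_range_of_det_gram_ne_zero hS]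
  rfl

end Gram

end Matrix

theorem psd_ci_well_defined_general
    {N : Type*} [Fintype N] [DecidableEq N]
    (A : Matrix N N ℝ) (hA : A.PosSemidef)
    (i j : N) (K : Finset N)
    (L L' : Finset N) (hL : L ⊆ K) (hL' : L' ⊆ K)
    (hdetL : (A.submatrix ((↑) : L → N) ((↑) : L → N)).det ≠ 0)
    (hdetL' : (A.submatrix ((↑) : L' → N) ((↑) : L' → N)).det ≠ 0)
    (hrkL : (A.submatrix ((↑) : L → N) ((↑) : L → N)).rank
          = (A.submatrix ((↑) : K → N) ((↑) : K → N)).rank)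
    (hrkL' : (A.submatrix ((↑) : L' → N) ((↑) : L' → N)).rank
           = (A.submatrix ((↑) : K → N) ((↑) : K → N)).rank) :
    ((A.submatrix (fun o : Option L => o.elim i (↑·))
        (fun o : Option L => o.elim j (↑·))).det = 0 ↔
     (A.submatrix (fun o : Option L' => o.elim i (↑·))
        (fun o : Option L' => o.elim j (↑·))).det = 0) := by
  obtain ⟨v, rfl⟩ := hA.exists_eq_gram
  rw [det_submatrix_optionElim_gram_eq_zero_iff v i j hdetL
      (span_range_comp_coe_eq_of_rank_gram_eq v hL hrkL),
    det_submatrix_optionElim_gram_eq_zero_iff v i j hdetL'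
      (span_range_comp_coe_eq_of_rank_gram_eq v hL' hrkL')]

/-- well-definedness of conditional independence for positive
semidefinite matrices.  If `L, L' ⊆ K` both have invertible principal
submatrices whose rank equals that of `Σ_K`, then the almost-principal minors
`det Σ_{iL,jL}` and `det Σ_{iL',jL'}` vanish simultaneously. -/
theorem psd_ci_well_defined
    {N : Type*} [Fintype N] [DecidableEq N]
    (A : Matrix N N ℝ) (hA : A.PosSemidef)
    (i j : N) (hij : i ≠ j) (K : Finset N) (hiK : i ∉ K) (hjK : j ∉ K)
    (L L' : Finset N) (hL : L ⊆ K) (hL' : L' ⊆ K)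
    (hdetL : (A.submatrix ((↑) : L → N) ((↑) : L → N)).det ≠ 0)
    (hdetL' : (A.submatrix ((↑) : L' → N) ((↑) : L' → N)).det ≠ 0)
    (hrkL : (A.submatrix ((↑) : L → N) ((↑) : L → N)).rank
          = (A.submatrix ((↑) : K → N) ((↑) : K → N)).rank)
    (hrkL' : (A.submatrix ((↑) : L' → N) ((↑) : L' → N)).rank
           = (A.submatrix ((↑) : K → N) ((↑) : K → N)).rank) :
    ((A.submatrix (fun o : Option L => o.elim i (↑·))
        (fun o : Option L => o.elim j (↑·))).det = 0 ↔
     (A.submatrix (fun o : Option L' => o.elim i (↑·))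
        (fun o : Option L' => o.elim j (↑·))).det = 0) :=
  psd_ci_well_defined_general A hA i j K L L' hL hL' hdetL hdetL' hrkL hrkL'
end

section
/- Let Σ be a real symmetric matrix indexed by {∞x, ∞y, 0, 1, x, y, z} such that (writing rows p ∈ {∞x,∞y,0,1} and columns e ∈ {x,y,z}): the coordinate block has pattern Σ_{∞x,·} = (*,0,0), Σ_{∞y,·} = (0,*,0), Σ_{0,·} = (0,0,*), Σ_{1,·} = (*,*,*) with * denoting nonzero entries; Σ_{∞x,∞y} = Σ_{∞x,0} = Σ_{∞y,0} = 0; Σ_{∞x,1}, Σ_{∞y,1}, Σ_{0,1} are nonzero; and Σ is positive semidefinite. If moreover for every pair a ≠ b among {∞x,∞y,0,1} and every subset L ⊆ {x,y,z} with det Σ_L ≠ 0 and rank Σ_L = rank Σ_{xyz} the almost-principal minor det Σ_{aL,bL} vanishes exactly when Σ_{ab} should encode ⟨a,b⟩ (in particular det Σ_{0L,1L} = 0 while Σ_{0,1} ≠ 0), then the 3×3 block Σ_{xyz} is invertible. -/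
/-!
Suppose `Σ_{xyz}` is singular. The row of `a = 0` (resp. `a = ∞y`) vanishes on `L = {x, y}`
(resp. `L = {x, z}`), so expanding `det Σ_{aL,1L}` along its first row gives
`Σ_{a,1} · det Σ_L`. If `Σ_L` is invertible it has the full rank `2` of `Σ_{xyz}`, and the CI
statement `(a1|xyz)` forces `Σ_{a,1} = 0`. If both of these minors vanish, then `Σ_{xyz}` has rank
one, since `Σ_{xx} ≠ 0` by semidefiniteness, and `L = {x}` with `a = 0` gives the same
contradiction.
-/

open Matrix Finset Function

namespace Matrix

open scoped ComplexOrder in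
theorem PosSemidef.apply_eq_zero_of_diag_eq_zero {n 𝕜 : Type*} [Fintype n] [RCLike 𝕜]
    {A : Matrix n n 𝕜} (hA : A.PosSemidef) {i j : n} (hj : A j j = 0) : A i j = 0 := by
  classical
  have hdet := (hA.submatrix ![i, j]).det_nonneg
  rw [det_fin_two] at hdet
  simp only [submatrix_apply, cons_val_zero, cons_val_one, hj, mul_zero, zero_sub] at hdet
  rw [← hA.1.apply j i, RCLike.star_def, RCLike.mul_conj, neg_nonneg, ← RCLike.ofReal_pow,
    RCLike.ofReal_nonpos] at hdet
  simpa using le_antisymm hdet (sq_nonneg _)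

theorem det_submatrix_cons_of_forall_eq_zero {ι R : Type*} [CommRing R] {n : ℕ}
    (A : Matrix ι ι R) (f : Fin n → ι) {a b : ι} (h : ∀ k, A a (f k) = 0) :
    (A.submatrix (Fin.cons a f) (Fin.cons b f)).det = A a b * (A.submatrix f f).det := by
  rw [det_succ_row_zero, Fin.sum_univ_succ]
  simp [h]

section Rank

variable {K : Type*} [Field K]

theorem rank_lt_card_of_det_eq_zero {n : Type*} [Fintype n] [DecidableEq n] {M : Matrix n n K}
    (h : M.det = 0) : M.rank < Fintype.card n := by
  refine (rank_le_card_width M).lt_of_ne fun hrank => ?_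
  have hrange : LinearMap.range M.mulVecLin = ⊤ :=
    Submodule.eq_top_of_finrank_eq (by rw [Module.finrank_fintype_fun_eq_card]; exact hrank)
  have hunit : IsUnit M := mulVec_surjective_iff_isUnit.mp (LinearMap.range_eq_top.mp hrange)
  exact ((isUnit_iff_isUnit_det M).mp hunit).ne_zero h

theorem card_le_rank_of_det_submatrix_ne_zero {m n κ : Type*} [Fintype n] [Fintype κ]
    [DecidableEq κ] (M : Matrix m n K) {r : κ → m} {c : κ → n} (h : (M.submatrix r c).det ≠ 0) :
    Fintype.card κ ≤ M.rank :=
  rank_of_det_ne_zero h ▸ rank_submatrix_le M r c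

theorem rank_le_one_of_forall_mul_eq {m n : Type*} [Fintype n] (M : Matrix m n K) {i : m} {j : n}
    (hij : M i j ≠ 0) (h : ∀ k l, M i j * M k l = M k j * M i l) : M.rank ≤ 1 := by
  have hM : M = vecMulVec (fun k => M k j) (fun l => M i l / M i j) := by
    ext k l
    rw [vecMulVec_apply, mul_div_assoc', eq_div_iff hij, mul_comm, h]
  exact hM ▸ rank_vecMulVec_le _ _

theorem rank_le_one_of_det_eq_zero_of_minors {M : Matrix (Fin 3) (Fin 3) K} (hM : M.IsSymm)
    (h00 : M 0 0 ≠ 0) (hdet : M.det = 0) (h01 : (M.submatrix ![0, 1] ![0, 1]).det = 0)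
    (h02 : (M.submatrix ![0, 2] ![0, 2]).det = 0) : M.rank ≤ 1 := by
  rw [det_fin_two] at h01 h02
  rw [det_fin_three] at hdet
  simp only [submatrix_apply, cons_val_zero, cons_val_one, hM.apply 0 1, hM.apply 0 2,
    hM.apply 1 2] at h01 h02 hdet
  have h12 : M 0 0 * M 1 2 = M 0 1 * M 0 2 := by
    -- `M₀₀ · det M = minor₀₁ · minor₀₂ - (M₀₀ M₁₂ - M₀₁ M₀₂)²` for symmetric `M`
    have : (M 0 0 * M 1 2 - M 0 1 * M 0 2) ^ 2 = 0 := by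
      linear_combination (M 0 0 * M 2 2 - M 0 2 * M 0 2) * h01 - M 0 0 * hdet
    exact sub_eq_zero.mp (pow_eq_zero_iff two_ne_zero |>.mp this)
  refine rank_le_one_of_forall_mul_eq M h00 fun k l => ?_
  fin_cases k <;> fin_cases l <;>
    simp only [Fin.zero_eta, Fin.mk_one, Fin.reduceFinMk, hM.apply 0 1, hM.apply 0 2, hM.apply 1 2] <;>
    grind

end Rank

section FinsetIndex

variable {ι κ R : Type*} [DecidableEq ι] [Fintype κ] [CommRing R] {f : κ → ι} {L : Finset ι}

noncomputable def _root_.Finset.equivOfImageEq (hf : Injective f) (hL : univ.image f = L) :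
    κ ≃ L :=
  Equiv.ofBijective (fun k => ⟨f k, hL ▸ mem_image_of_mem f (mem_univ k)⟩) <| by
    refine ⟨fun k l hkl => hf (congrArg Subtype.val hkl), fun ⟨x, hx⟩ => ?_⟩
    obtain ⟨k, -, rfl⟩ := mem_image.mp (hL ▸ hx)
    exact ⟨k, rfl⟩

theorem det_submatrix_coe_of_image_eq [DecidableEq κ] (A : Matrix ι ι R) (hf : Injective f)
    (hL : univ.image f = L) : (A.submatrix ((↑) : L → ι) ((↑) : L → ι)).det =
      (A.submatrix f f).det := by
  rw [← det_submatrix_equiv_self (equivOfImageEq hf hL), submatrix_submatrix]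
  rfl

theorem rank_submatrix_coe_of_image_eq (A : Matrix ι ι R) (hf : Injective f)
    (hL : univ.image f = L) : (A.submatrix ((↑) : L → ι) ((↑) : L → ι)).rank =
      (A.submatrix f f).rank := by
  rw [← rank_submatrix _ (equivOfImageEq hf hL) (equivOfImageEq hf hL), submatrix_submatrix]
  rfl

theorem det_submatrix_optionElim_of_image_eq {n : ℕ} (A : Matrix ι ι R) {f : Fin n → ι}
    (hf : Injective f) (hL : univ.image f = L) (a b : ι) :
    (A.submatrix (fun o : Option L => o.elim a fun x => (x : ι))
      (fun o : Option L => o.elim b fun x => (x : ι))).det =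
      (A.submatrix (Fin.cons a f) (Fin.cons b f)).det := by
  let e := (finSuccEquiv n).trans (Equiv.optionCongr (equivOfImageEq hf hL))
  rw [← det_submatrix_equiv_self e, submatrix_submatrix]
  congr <;> funext i <;> cases i using Fin.cases <;> rfl

theorem apply_eq_zero_of_det_submatrix_optionElim_eq_zero [IsDomain R] {n : ℕ}
    (A : Matrix ι ι R) {f : Fin n → ι} (hf : Injective f) (hL : univ.image f = L) {a b : ι}
    (hrow : ∀ k, A a (f k) = 0) (hdet : (A.submatrix f f).det ≠ 0)
    (h : (A.submatrix (fun o : Option L => o.elim a fun x => (x : ι))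
      (fun o : Option L => o.elim b fun x => (x : ι))).det = 0) : A a b = 0 := by
  rw [det_submatrix_optionElim_of_image_eq A hf hL, det_submatrix_cons_of_forall_eq_zero A f hrow]
    at h
  exact (mul_eq_zero.mp h).resolve_right hdet

end FinsetIndex

end Matrix

theorem semidefinite_coordinate_block_invertible_general
    (A : Matrix (Fin 7) (Fin 7) ℝ) (hpsd : A.PosSemidef)
    -- coordinate block pattern: ∞x = (*,0,0), ∞y = (0,*,0), 0 = (0,0,*),
    -- 1 = (*,*,*)
    (h0x : A 0 4 ≠ 0)
    (h1x : A 1 4 = 0) (h1z : A 1 6 = 0)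
    (h2x : A 2 4 = 0) (h2y : A 2 5 = 0)
    -- scalar products of the standard basis points, constraint (S):
    (h13 : A 1 3 ≠ 0) (h23 : A 2 3 ≠ 0)
    -- the CI statements (ab|xyz) hold for all distinct basis points, tested on
    -- any full-rank invertible subset L ⊆ {x,y,z}:
    (hCI : ∀ a b : Fin 7, a ∈ ({0, 1, 2, 3} : Finset (Fin 7)) →
        b ∈ ({0, 1, 2, 3} : Finset (Fin 7)) → a ≠ b →
        ∀ L : Finset (Fin 7), L ⊆ ({4, 5, 6} : Finset (Fin 7)) →
          (A.submatrix ((↑) : L → Fin 7) ((↑) : L → Fin 7)).det ≠ 0 →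
          (A.submatrix ((↑) : L → Fin 7) ((↑) : L → Fin 7)).rank
            = (A.submatrix ((↑) : ({4, 5, 6} : Finset (Fin 7)) → Fin 7)
                ((↑) : ({4, 5, 6} : Finset (Fin 7)) → Fin 7)).rank →
          (A.submatrix (fun o : Option L => o.elim a (↑·))
            (fun o : Option L => o.elim b (↑·))).det = 0) :
    (A.submatrix ![4, 5, 6] ![4, 5, 6]).det ≠ 0 := by
  intro hdet
  set v : Fin 3 → Fin 7 := ![4, 5, 6]
  set M := A.submatrix v v
  have hv : Injective v := by decide
  have hci : ∀ a ∈ ({0, 1, 2, 3} : Finset (Fin 7)), a ≠ 3 → ∀ (n : ℕ) (g : Fin n → Fin 3),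
      Injective g → (∀ k, A a (v (g k)) = 0) → (M.submatrix g g).det ≠ 0 → M.rank = n →
      A a 3 = 0 := by
    intro a ha ha3 n g hg hrow hdetg hrank
    have hvg : Injective (v ∘ g) := hv.comp hg
    have hsub : univ.image (v ∘ g) ⊆ {4, 5, 6} := by
      have hv456 : ∀ i, v i ∈ ({4, 5, 6} : Finset (Fin 7)) := by decide
      exact image_subset_iff.mpr fun k _ => hv456 (g k)
    rw [show M.submatrix g g = A.submatrix (v ∘ g) (v ∘ g) from submatrix_submatrix ..] at hdetg
    refine apply_eq_zero_of_det_submatrix_optionElim_eq_zero A hvg rfl hrow hdetg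
      (hCI a 3 ha (by decide) ha3 _ hsub (by rwa [det_submatrix_coe_of_image_eq A hvg rfl]) ?_)
    rw [rank_submatrix_coe_of_image_eq A hvg rfl, rank_submatrix_coe_of_image_eq A hv (by decide),
      rank_of_det_ne_zero hdetg, Fintype.card_fin, hrank]
  have hrank2 : ∀ g : Fin 2 → Fin 3, (M.submatrix g g).det ≠ 0 → M.rank = 2 := fun g hg =>
    le_antisymm (Nat.lt_succ_iff.mp (rank_lt_card_of_det_eq_zero hdet))
      (by simpa using card_le_rank_of_det_submatrix_ne_zero M hg)
  by_cases hxy : (M.submatrix ![0, 1] ![0, 1]).det = 0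
  · by_cases hxz : (M.submatrix ![0, 2] ![0, 2]).det = 0
    · have hxx : M 0 0 ≠ 0 := fun h => h0x (hpsd.apply_eq_zero_of_diag_eq_zero h)
      have hdetx : (M.submatrix ![0] ![0]).det ≠ 0 := by rwa [det_unique]
      have hrank1 : M.rank = 1 := le_antisymm
        (rank_le_one_of_det_eq_zero_of_minors (isHermitian_iff_isSymm.mp (hpsd.1.submatrix v))
          hxx hdet hxy hxz)
        (by simpa using card_le_rank_of_det_submatrix_ne_zero M hdetx)
      exact h23 (hci 2 (by decide) (by decide) 1 ![0] (by decide) (by simp [v, h2x]) hdetx hrank1)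
    · exact h13 (hci 1 (by decide) (by decide) 2 ![0, 2] (by decide)
        (fun k => by fin_cases k <;> simpa [v]) hxz (hrank2 _ hxz))
  · exact h23 (hci 2 (by decide) (by decide) 2 ![0, 1] (by decide)
      (fun k => by fin_cases k <;> simpa [v]) hxy (hrank2 _ hxy))

/-- a positive semidefinite matrix on indices
`∞x, ∞y, 0, 1, x, y, z` (here `0,1,2,3,4,5,6`) storing the standard projective
basis in its coordinate block and satisfying the CI statements `(ab|xyz)` for
all distinct basis points `a, b` (in the semidefinite sense, via any full-rank
subset `L` of `{x,y,z}`), while `Σ_{0,1} ≠ 0`, has an invertible `Σ_{xyz}`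
block. -/
theorem semidefinite_coordinate_block_invertible
    (A : Matrix (Fin 7) (Fin 7) ℝ) (hpsd : A.PosSemidef)
    -- coordinate block pattern: ∞x = (*,0,0), ∞y = (0,*,0), 0 = (0,0,*),
    -- 1 = (*,*,*)
    (h0x : A 0 4 ≠ 0) (h0y : A 0 5 = 0) (h0z : A 0 6 = 0)
    (h1x : A 1 4 = 0) (h1y : A 1 5 ≠ 0) (h1z : A 1 6 = 0)
    (h2x : A 2 4 = 0) (h2y : A 2 5 = 0) (h2z : A 2 6 ≠ 0)
    (h3x : A 3 4 ≠ 0) (h3y : A 3 5 ≠ 0) (h3z : A 3 6 ≠ 0)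
    -- scalar products of the standard basis points, constraint (S):
    (h01 : A 0 1 = 0) (h02 : A 0 2 = 0) (h12 : A 1 2 = 0)
    (h03 : A 0 3 ≠ 0) (h13 : A 1 3 ≠ 0) (h23 : A 2 3 ≠ 0)
    -- the CI statements (ab|xyz) hold for all distinct basis points, tested on
    -- any full-rank invertible subset L ⊆ {x,y,z}:
    (hCI : ∀ a b : Fin 7, a ∈ ({0, 1, 2, 3} : Finset (Fin 7)) →
        b ∈ ({0, 1, 2, 3} : Finset (Fin 7)) → a ≠ b →
        ∀ L : Finset (Fin 7), L ⊆ ({4, 5, 6} : Finset (Fin 7)) →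
          (A.submatrix ((↑) : L → Fin 7) ((↑) : L → Fin 7)).det ≠ 0 →
          (A.submatrix ((↑) : L → Fin 7) ((↑) : L → Fin 7)).rank
            = (A.submatrix ((↑) : ({4, 5, 6} : Finset (Fin 7)) → Fin 7)
                ((↑) : ({4, 5, 6} : Finset (Fin 7)) → Fin 7)).rank →
          (A.submatrix (fun o : Option L => o.elim a (↑·))
            (fun o : Option L => o.elim b (↑·))).det = 0) :
    (A.submatrix ![4, 5, 6] ![4, 5, 6]).det ≠ 0 :=
  semidefinite_coordinate_block_invertible_general A hpsd h0x h1x h1z h2x h2y h13 h23 hCI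
end
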